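/- arXiv:1505.04019 — 9 statements merged into one kernel-verified Lean document; each statement's English description precedes it below -/
import Mathlib

section
/- Any vertex of a directed graph can be the entrance of at most one superbubble; similarly, any vertex can be the exit of at most one superbubble. -/
/-- `v` is reachable from `s` by a directed path whose internal vertices
(all vertices except the endpoints) avoid `avoid`. -/
def ReachWithout {V : Type*} (E : V → V → Prop) (avoid s v : V) : Prop :=
  s = v ∨ ∃ w, Relation.ReflTransGen (fun a b => E a b ∧ b ≠ avoid) s w ∧ E w v

/-- `t` is reachable from `v` by a directed path whose internal vertices avoid `avoid`. -/
def CoReachWithout {V : Type*} (E : V → V → Prop) (avoid v t : V) : Prop :=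
  v = t ∨ ∃ w, E v w ∧ Relation.ReflTransGen (fun a b => E a b ∧ a ≠ avoid) w t

/-- The subgraph induced by `U` is acyclic. -/
def AcyclicOn {V : Type*} (E : V → V → Prop) (U : Set V) : Prop :=
  ∀ v, ¬ Relation.TransGen (fun a b => E a b ∧ a ∈ U ∧ b ∈ U) v v

/-- The directed graph is acyclic. -/
def Acyclic {V : Type*} (E : V → V → Prop) : Prop :=
  ∀ v, ¬ Relation.TransGen E v v

/-- The reachability, matching and acyclicity conditions of a superbubble
(Definition 1, without minimality). -/
def SBCore {V : Type*} (E : V → V → Prop) (s t : V) : Prop :=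
  s ≠ t ∧ Relation.TransGen E s t ∧
  (∀ v, ReachWithout E t s v ↔ CoReachWithout E s v t) ∧
  AcyclicOn E {v | ReachWithout E t s v}

/-- `⟨s, t⟩` is a superbubble: reachability, matching, acyclicity and minimality. -/
def Superbubble {V : Type*} (E : V → V → Prop) (s t : V) : Prop :=
  SBCore E s t ∧ ∀ t', ReachWithout E t s t' → t' ≠ t → ¬ SBCore E s t'

/-!
Write `U(s, t)` for the vertices reachable from `s` without passing through `t`.

Two exits `t₁ ≠ t₂` of `s`: a path from `s` to `t₂` either avoids `t₁` or passes through it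
first, so one exit lies in the interior of the other superbubble, against minimality.

Two entrances `s₁ ≠ s₂` of `t`: in the same way one of them, say `s₁`, lies in `U(s₂, t)`.
If also `s₂ ∈ U(s₁, t)`, the two paths close a cycle in `U(s₂, t)`. Otherwise `s₁` separates
`s₂` from `t`, and then `⟨s₂, s₁⟩` already satisfies reachability, matching and acyclicity,
against the minimality of `⟨s₂, t⟩`.
-/

section Superbubbles

variable {V : Type*} {E : V → V → Prop} {P Q : V → Prop} {a b c s v w : V}

/-- `v` is reachable from `s` by a path whose internal vertices satisfy `P`;
`ReachWithout E t` is `ReachVia E (· ≠ t)`. -/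
def ReachVia (E : V → V → Prop) (P : V → Prop) (s v : V) : Prop :=
  s = v ∨ ∃ w, Relation.ReflTransGen (fun a b => E a b ∧ P b) s w ∧ E w v

namespace ReachVia

theorem refl : ReachVia E P s s := Or.inl rfl

theorem single (h : E s v) : ReachVia E P s v :=
  Or.inr ⟨s, .refl, h⟩

theorem head (h : E s b) (hb : P b) (hr : ReachVia E P b v) : ReachVia E P s v := by
  rcases hr with rfl | ⟨w, hw, hwv⟩
  · exact single h
  · exact Or.inr ⟨w, .head ⟨h, hb⟩ hw, hwv⟩

theorem tail (hr : ReachVia E P s w) (hw : P w) (h : E w v) : ReachVia E P s v := by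
  rcases hr with rfl | ⟨u, hu, huw⟩
  · exact single h
  · exact Or.inr ⟨w, hu.tail ⟨huw, hw⟩, h⟩

theorem trans (hab : ReachVia E P a b) (hb : P b) (hbc : ReachVia E P b c) :
    ReachVia E P a c := by
  rcases hbc with rfl | ⟨w, hw, hwc⟩
  · exact hab
  · rcases hab with rfl | ⟨u, hu, hub⟩
    · exact Or.inr ⟨w, hw, hwc⟩
    · exact Or.inr ⟨w, (hu.tail ⟨hub, hb⟩).trans hw, hwc⟩

theorem mono (hPQ : ∀ v, P v → Q v) (h : ReachVia E P s v) : ReachVia E Q s v := by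
  rcases h with rfl | ⟨w, hw, hwv⟩
  · exact refl
  · exact Or.inr
      ⟨w, Relation.ReflTransGen.mono (fun _ _ hab => ⟨hab.1, hPQ _ hab.2⟩) _ _ hw, hwv⟩

theorem of_transGen (h : Relation.TransGen E s v) : ReachVia E (fun _ => True) s v := by
  induction h with
  | single h => exact single h
  | tail _ h ih => exact ih.tail trivial h

theorem transGen (h : ReachVia E P s v) (hne : s ≠ v) : Relation.TransGen E s v := by
  rcases h with rfl | ⟨w, hw, hwv⟩
  · exact absurd rfl hne
  · exact .tail' (Relation.ReflTransGen.mono (fun _ _ hab => hab.1) _ _ hw) hwv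

/-- Cut a path at its first visit to `c`, if any. -/
theorem avoid_or_first_visit (h : ReachVia E P s v) (c : V) :
    ReachVia E (fun z => P z ∧ z ≠ c) s v ∨ ReachVia E (fun z => P z ∧ z ≠ c) s c := by
  rcases h with rfl | ⟨w, hw, hwv⟩
  · exact Or.inl refl
  · induction hw using Relation.ReflTransGen.head_induction_on with
    | refl => exact Or.inl (single hwv)
    | @head x y hxy _ ih =>
      rcases eq_or_ne y c with rfl | hyc
      · exact Or.inr (single hxy.1)
      · exact ih.imp (head hxy.1 ⟨hxy.2, hyc⟩) (head hxy.1 ⟨hxy.2, hyc⟩)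

/-- Cut a path at its last visit to `c`, if any. -/
theorem avoid_or_last_visit (h : ReachVia E P s v) (c : V) :
    ReachVia E (fun z => P z ∧ z ≠ c) s v ∨ ReachVia E (fun z => P z ∧ z ≠ c) c v := by
  rcases h with rfl | ⟨w, hw, hwv⟩
  · exact Or.inl refl
  · induction hw using Relation.ReflTransGen.head_induction_on with
    | refl => exact Or.inl (single hwv)
    | @head x y hxy _ ih =>
      rcases ih with h | h
      · rcases eq_or_ne y c with rfl | hyc
        · exact Or.inr h
        · exact Or.inl (head hxy.1 ⟨hxy.2, hyc⟩ h)
      · exact Or.inr h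

theorem transGen_induced_of_forward_closed {U : Set V}
    (hU : ∀ x y, E x y → x ∈ U → P x → y ∈ U) (ha : a ∈ U) (hPa : P a)
    (h : ReachVia E P a b) (hne : a ≠ b) :
    Relation.TransGen (fun x y => E x y ∧ x ∈ U ∧ y ∈ U) a b := by
  rcases h with rfl | ⟨w, hw, hwb⟩
  · exact absurd rfl hne
  have hpath : Relation.ReflTransGen (fun x y => E x y ∧ x ∈ U ∧ y ∈ U) a w ∧ w ∈ U ∧ P w := by
    clear hwb
    induction hw with
    | refl => exact ⟨.refl, ha, hPa⟩
    | tail _ hxy ih =>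
      obtain ⟨hr, hx, hPx⟩ := ih
      have hy := hU _ _ hxy.1 hx hPx
      exact ⟨hr.tail ⟨hxy.1, hx, hy⟩, hy, hxy.2⟩
  obtain ⟨hr, hw, hPw⟩ := hpath
  exact .tail' hr ⟨hwb, hw, hU _ _ hwb hw hPw⟩

theorem transGen_induced_of_backward_closed {U : Set V}
    (hU : ∀ x y, E x y → y ∈ U → P y → x ∈ U) (hb : b ∈ U) (hPb : P b)
    (h : ReachVia E P a b) (hne : a ≠ b) :
    Relation.TransGen (fun x y => E x y ∧ x ∈ U ∧ y ∈ U) a b := by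
  rcases h with rfl | ⟨w, hw, hwb⟩
  · exact absurd rfl hne
  have hwU := hU _ _ hwb hb hPb
  have hpath : w ∈ U → Relation.ReflTransGen (fun x y => E x y ∧ x ∈ U ∧ y ∈ U) a w := by
    clear hwb hwU
    induction hw with
    | refl => exact fun _ => .refl
    | tail _ hxy ih =>
      intro hy
      have hx := hU _ _ hxy.1 hy hxy.2
      exact (ih hx).tail ⟨hxy.1, hx, hy⟩
  exact .tail' (hpath hwU) ⟨hwb, hwU, hb⟩

end ReachVia

theorem reachVia_ne_or_reachVia_ne_of_transGen (h : Relation.TransGen E s v) (a : V) :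
    ReachVia E (· ≠ a) s v ∨ ReachVia E (· ≠ v) s a := by
  rcases (ReachVia.of_transGen h).avoid_or_first_visit a with h | h
  · exact Or.inl (h.mono fun _ hz => hz.2)
  · rcases h.avoid_or_first_visit v with h | h
    · exact Or.inr (h.mono fun _ hz => hz.2)
    · exact Or.inl (h.mono fun _ hz => hz.1.2)

theorem coReachWithout_iff_reachVia {x : V} :
    CoReachWithout E x s v ↔ ReachVia E (· ≠ x) s v := by
  constructor
  · rintro (rfl | ⟨w, hsw, hw⟩)
    · exact .refl
    · induction hw with
      | refl => exact .single hsw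
      | tail _ hyz ih => exact ih.tail hyz.2 hyz.1
  · rintro (rfl | ⟨w, hw, hwv⟩)
    · exact Or.inl rfl
    · refine Or.inr ?_
      induction hw using Relation.ReflTransGen.head_induction_on with
      | refl => exact ⟨v, hwv, .refl⟩
      | head hxy _ ih =>
        obtain ⟨u, hyu, hu⟩ := ih
        exact ⟨_, hxy.1, .head ⟨hyu, hxy.2⟩ hu⟩

theorem SBCore.reachVia_iff {t : V} (h : SBCore E s t) (v : V) :
    ReachVia E (· ≠ t) s v ↔ ReachVia E (· ≠ s) v t :=
  (h.2.2.1 v).trans coReachWithout_iff_reachVia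

theorem ReachVia.transGen_interior {t u v : V} (hu : ReachVia E (· ≠ t) s u) (hut : u ≠ t)
    (huv : ReachVia E (· ≠ t) u v) (hne : u ≠ v) :
    Relation.TransGen (fun x y => E x y ∧ x ∈ {z | ReachVia E (· ≠ t) s z} ∧
      y ∈ {z | ReachVia E (· ≠ t) s z}) u v :=
  transGen_induced_of_forward_closed (fun _ _ hxy hx hxt => hx.tail hxt hxy) hu hut huv hne

theorem SBCore.transGen_interior {t u v : V} (h : SBCore E s t)
    (hv : ReachVia E (· ≠ t) s v) (hvs : v ≠ s) (huv : ReachVia E (· ≠ s) u v) (hne : u ≠ v) :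
    Relation.TransGen (fun x y => E x y ∧ x ∈ {z | ReachVia E (· ≠ t) s z} ∧
      y ∈ {z | ReachVia E (· ≠ t) s z}) u v :=
  ReachVia.transGen_induced_of_backward_closed
    (fun x y hxy (hy : ReachVia E (· ≠ t) s y) hys =>
      (h.reachVia_iff x).2 (((h.reachVia_iff y).1 hy).head hxy hys)) hv hvs huv hne

/-- The two paths would form a cycle in the interior of `⟨s, t⟩`. -/
theorem SBCore.not_reachVia_entrance {t u : V} (h : SBCore E s t)
    (hu : ReachVia E (· ≠ t) s u) (hut : u ≠ t) (hus : u ≠ s) :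
    ¬ ReachVia E (· ≠ t) u s := fun hback =>
  h.2.2.2 s ((ReachVia.refl.transGen_interior h.1 hu hus.symm).trans
    (hu.transGen_interior hut hback hus))

theorem SBCore.of_separating {t u : V} (h : SBCore E s t)
    (hu : ReachVia E (· ≠ t) s u) (hut : u ≠ t) (hsep : ¬ ReachVia E (· ≠ u) s t) :
    SBCore E s u := by
  have hm := h.reachVia_iff
  have hus : u ≠ s := by
    rintro rfl
    exact hsep ((hm u).1 .refl)
  have hsub : ∀ v, ReachVia E (· ≠ u) s v → ReachVia E (· ≠ t) s v := by
    intro v hv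
    rcases hv.avoid_or_first_visit t with hsv | hst
    · exact hsv.mono fun _ hz => hz.2
    · exact absurd (hst.mono fun _ hz => hz.1) hsep
  have hforward : ∀ v, ReachVia E (· ≠ u) s v → ReachVia E (· ≠ s) v u := by
    intro v hv
    rcases eq_or_ne v u with rfl | hvu
    · exact .refl
    rcases ((hm v).1 (hsub v hv)).avoid_or_first_visit u with hvt | hvu'
    · exact absurd (hv.trans hvu (hvt.mono fun _ hz => hz.2)) hsep
    · exact hvu'.mono fun _ hz => hz.1
  have hbackward : ∀ v, ReachVia E (· ≠ s) v u → ReachVia E (· ≠ u) s v := by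
    intro v hv
    rcases eq_or_ne v u with rfl | hvu
    · rcases hu.avoid_or_first_visit v with hsv | hsv <;> exact hsv.mono fun _ hz => hz.2
    have hvU : ReachVia E (· ≠ t) s v := (hm v).2 (hv.trans hus ((hm u).1 hu))
    rcases hvU.avoid_or_last_visit u with hsv | huv
    · exact hsv.mono fun _ hz => hz.2
    -- otherwise `u → v → u` is a cycle in the interior of `⟨s, t⟩`
    exact absurd ((hu.transGen_interior hut (huv.mono fun _ hz => hz.1) hvu.symm).trans
      (h.transGen_interior hu hus hv hvu)) (h.2.2.2 u)
  refine ⟨hus.symm, hu.transGen hus.symm, fun v => ?_, fun v hcyc => h.2.2.2 v ?_⟩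
  · rw [coReachWithout_iff_reachVia]
    exact ⟨hforward v, hbackward v⟩
  · exact Relation.TransGen.mono (fun a b hab => ⟨hab.1, hsub a hab.2.1, hsub b hab.2.2⟩) _ _ hcyc

theorem Superbubble.entrance_eq_of_reachVia {s₁ s₂ t : V} (h₁ : Superbubble E s₁ t)
    (h₂ : Superbubble E s₂ t) (hmem : ReachVia E (· ≠ t) s₂ s₁) : s₁ = s₂ := by
  by_contra hne
  by_cases hback : ReachVia E (· ≠ t) s₁ s₂
  · exact h₂.1.not_reachVia_entrance hmem h₁.1.1 hne hback
  · have hsep : ¬ ReachVia E (· ≠ s₁) s₂ t := fun h => hback ((h₁.1.reachVia_iff s₂).2 h)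
    exact h₂.2 s₁ hmem h₁.1.1 (h₂.1.of_separating hmem h₁.1.1 hsep)

end Superbubbles

/-- Any vertex can be the entrance of at most one superbubble, and
any vertex can be the exit of at most one superbubble. -/
theorem entrance_and_exit_unique {V : Type*} (E : V → V → Prop) :
    (∀ s t₁ t₂ : V, Superbubble E s t₁ → Superbubble E s t₂ → t₁ = t₂) ∧
    (∀ s₁ s₂ t : V, Superbubble E s₁ t → Superbubble E s₂ t → s₁ = s₂) := by
  refine ⟨fun s t₁ t₂ h₁ h₂ => ?_, fun s₁ s₂ t h₁ h₂ => ?_⟩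
  · by_contra hne
    rcases reachVia_ne_or_reachVia_ne_of_transGen h₂.1.2.1 t₁ with h | h
    · exact h₁.2 t₂ h (Ne.symm hne) h₂.1
    · exact h₂.2 t₁ h hne h₁.1
  · rcases reachVia_ne_or_reachVia_ne_of_transGen h₂.1.2.1 s₁ with h | h
    · exact (h₂.entrance_eq_of_reachVia h₁ ((h₁.1.reachVia_iff s₂).2 h)).symm
    · exact h₁.entrance_eq_of_reachVia h₂ h
end

section
/- For any superbubble ⟨s, t⟩ in a directed acyclic graph G with a single source and single sink, there exists a parent p of t (i.e., an edge (p, t) ∈ E) such that p has exactly one child, namely t. -/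
/-!
The vertices reachable from `s` without passing through `t` form a set `U` on which the graph
is acyclic; as `V` is finite, `U \ {t}` (which contains `s`) has a vertex `p` with no child in
`U \ {t}`. Every child of a vertex of `U \ {t}` lies in `U`, so every child of `p` is `t`; and
`p` has a child at all because matching makes `t` reachable from `p`.
-/

theorem ReachWithout.tail {V : Type*} {E : V → V → Prop} {t s p u : V}
    (hp : ReachWithout E t s p) (hpt : p ≠ t) (hpu : E p u) : ReachWithout E t s u := by
  rcases hp with rfl | ⟨w, hsw, hwp⟩
  · exact Or.inr ⟨s, .refl, hpu⟩
  · exact Or.inr ⟨p, hsw.tail ⟨hwp, hpt⟩, hpu⟩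

theorem AcyclicOn.mono {V : Type*} {E : V → V → Prop} {S U : Set V} (hU : AcyclicOn E U)
    (hSU : S ⊆ U) : AcyclicOn E S := fun v hv =>
  hU v (Relation.TransGen.mono (fun _ _ hab => ⟨hab.1, hSU hab.2.1, hSU hab.2.2⟩) v v hv)

theorem AcyclicOn.exists_forall_not_rel {V : Type*} [Finite V] {E : V → V → Prop} {S : Set V}
    (hS : AcyclicOn E S) (hne : S.Nonempty) : ∃ p ∈ S, ∀ u ∈ S, ¬ E p u := by
  let R : V → V → Prop := fun a b => E a b ∧ a ∈ S ∧ b ∈ S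
  have : Std.Irrefl (flip (Relation.TransGen R)) := ⟨hS⟩
  have : IsTrans V (flip (Relation.TransGen R)) := ⟨fun _ _ _ hab hbc => hbc.trans hab⟩
  have hwf : WellFounded (flip (Relation.TransGen R)) := Finite.wellFounded_of_trans_of_irrefl _
  obtain ⟨p, hpS, hpmax⟩ := hwf.has_min S hne
  exact ⟨p, hpS, fun u huS hpu => hpmax u huS (.single ⟨hpu, hpS, huS⟩)⟩

theorem exit_has_parent_with_unique_child_general {V : Type*} [Fintype V] (E : V → V → Prop)
    (s t : V) (hSB : Superbubble E s t) :
    ∃ p, E p t ∧ ∀ u, E p u → u = t := by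
  obtain ⟨⟨hst, -, hmatch, hacyc⟩, -⟩ := hSB
  set U : Set V := {v | ReachWithout E t s v}
  obtain ⟨p, ⟨hpU, hpt⟩, hpmax⟩ :=
    (hacyc.mono (S := U \ {t}) Set.sdiff_subset).exists_forall_not_rel ⟨s, Or.inl rfl, hst⟩
  have hchild : ∀ u, E p u → u = t := fun u hpu =>
    by_contra fun hut => hpmax u ⟨ReachWithout.tail hpU hpt hpu, hut⟩ hpu
  rcases (hmatch p).1 hpU with rfl | ⟨w, hpw, -⟩
  · exact (hpt rfl).elim
  · exact ⟨p, hchild w hpw ▸ hpw, hchild⟩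

/-- For any superbubble ⟨s, t⟩ in a DAG with a single source and single sink,
there is a parent p of t whose only child is t. -/
theorem exit_has_parent_with_unique_child {V : Type*} [Fintype V] (E : V → V → Prop)
    (hA : Acyclic E)
    (hSource : ∃! r : V, ∀ u, ¬ E u r)
    (hSink : ∃! q : V, ∀ u, ¬ E q u)
    (s t : V) (hSB : Superbubble E s t) :
    ∃ p, E p t ∧ ∀ u, E p u → u = t :=
  exit_has_parent_with_unique_child_general E s t hSB
end

section
/- Let ⟨s, t⟩ be a superbubble in a directed acyclic graph G with vertex set U, and let ordD be a topological ordering of G obtained by depth-first topological sort (so that subtrees of the associated DFS spanning tree occupy contiguous order intervals). Then for every vertex x ∈ U \ {s, t}, ordD[s] < ordD[x] < ordD[t]. -/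
/-- Let ⟨s, t⟩ be a superbubble in a DAG with a single source and single sink, and let
ordD be a topological ordering produced by depth-first topological sort (its spanning
tree T assigns contiguous order intervals to subtrees). Then every vertex of the
superbubble other than s and t has order strictly between those of s and t. -/
theorem superbubble_interior_order {V : Type*} [Fintype V] (E T : V → V → Prop) (root : V)
    (hA : Acyclic E)
    (hSource : ∃! r : V, ∀ u, ¬ E u r)
    (hSink : ∃! q : V, ∀ u, ¬ E q u)
    (hTE : ∀ a b, T a b → E a b)
    (hRoot : ∀ u, ¬ E u root)
    (hSpan : ∀ v, Relation.ReflTransGen T root v)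
    (ordD : V → ℕ) (hinj : Function.Injective ordD)
    (htopo : ∀ a b, E a b → ordD a < ordD b)
    (hInterval : ∀ v : V, ∃ k : ℕ, ∀ x : V,
      Relation.ReflTransGen T v x ↔ ordD v ≤ ordD x ∧ ordD x ≤ k)
    (s t : V) (hSB : Superbubble E s t)
    (x : V) (hxU : ReachWithout E t s x) (hxs : x ≠ s) (hxt : x ≠ t) :
    ordD s < ordD x ∧ ordD x < ordD t := by
  have mono : ∀ (r : V → V → Prop), (∀ a b, r a b → E a b) →
      ∀ a b, Relation.ReflTransGen r a b → ordD a ≤ ordD b := by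
    intro r hr a b h
    induction h with
    | refl => exact le_refl _
    | tail _ hbc ih => exact ih.trans (htopo _ _ (hr _ _ hbc)).le
  constructor
  · rcases hxU with h | ⟨w, hp, hw⟩
    · exact absurd h.symm hxs
    · exact lt_of_le_of_lt (mono _ (fun a b h => h.1) _ _ hp) (htopo _ _ hw)
  · have hco := (hSB.1.2.2.1 x).mp hxU
    rcases hco with h | ⟨w, hw, hp⟩
    · exact absurd h hxt
    · exact lt_of_lt_of_le (htopo _ _ hw) (mono _ (fun a b h => h.1) _ _ hp)
end

section
/- Let ⟨s, t⟩ be a superbubble with vertex set U in a directed acyclic graph G with a single source, and let ordD be a topological ordering obtained by depth-first topological sort whose associated spanning tree T (rooted at the source) assigns contiguous order intervals to subtrees. Then for every vertex y ∉ U, either ordD[y] < ordD[s] or ordD[y] > ordD[t]. -/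
/-!
Write `U` for the vertex set of `⟨s, t⟩`. By the matching condition, `U` is closed under
in-edges into vertices other than `s`, so walking back along the tree path from the root to
any vertex of `U` we stay in `U` until we meet `s`: every vertex of `U`, in particular `t`, lies
in the subtree of `s`. Hence `ordD s ≤ ordD y ≤ ordD t` puts `y` in that subtree too, and the tree
path from `s` to `y` has all its vertices below `ordD t` except possibly `y`, so it avoids `t` and
witnesses `y ∈ U`.
-/

open Relation

section Order

variable {V α : Type*} [Preorder α] {R : V → V → Prop} {f : V → α}

theorem le_of_reflTransGen_of_strictMono (hf : ∀ a b, R a b → f a < f b) {a b : V}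
    (h : ReflTransGen R a b) : f a ≤ f b := by
  induction h with
  | refl => exact le_rfl
  | tail _ hbc ih => exact ih.trans (hf _ _ hbc).le

theorem reflTransGen_ne_of_lt_of_strictMono (hf : ∀ a b, R a b → f a < f b) {a b c : V}
    (h : ReflTransGen R a b) (hbc : f b < f c) :
    ReflTransGen (fun x y => R x y ∧ y ≠ c) a b := by
  induction h with
  | refl => exact .refl
  | tail _ hxb ih =>
    exact (ih ((hf _ _ hxb).trans hbc)).tail ⟨hxb, by rintro rfl; exact hbc.false⟩

end Order

section Reach

variable {V : Type*} {E : V → V → Prop} {s t v w : V}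

theorem ReachWithout.reflTransGen (h : ReachWithout E t s v) : ReflTransGen E s v := by
  rcases h with rfl | ⟨u, hsu, huv⟩
  · exact .refl
  · exact (ReflTransGen.mono (fun _ _ hab => hab.1) _ _ hsu).tail huv

theorem ReachWithout.of_edge (hv : ReachWithout E t s v) (hvt : v ≠ t) (hvw : E v w) :
    ReachWithout E t s w := by
  rcases hv with rfl | ⟨u, hsu, huv⟩
  · exact .inr ⟨_, .refl, hvw⟩
  · exact .inr ⟨v, hsu.tail ⟨huv, hvt⟩, hvw⟩

theorem ReachWithout.or_avoid_of_reflTransGen (h : ReflTransGen E s v) :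
    ReachWithout E t s v ∨ ReachWithout E t s t := by
  induction h with
  | refl => exact .inl (.inl rfl)
  | @tail u w _ huw ih =>
    refine ih.elim (fun hu => ?_) .inr
    by_cases hut : u = t
    · exact .inr (hut ▸ hu)
    · exact .inl (hu.of_edge hut huw)

theorem ReachWithout.avoid_of_reflTransGen (h : ReflTransGen E s t) : ReachWithout E t s t :=
  (ReachWithout.or_avoid_of_reflTransGen h).elim id id

theorem CoReachWithout.of_edge (hw : CoReachWithout E s w t) (hws : w ≠ s) (hvw : E v w) :
    CoReachWithout E s v t := by
  refine .inr ⟨w, hvw, ?_⟩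
  rcases hw with rfl | ⟨x, hwx, hxt⟩
  · exact .refl
  · exact .head ⟨hwx, hws⟩ hxt

theorem ReachWithout.of_edge_of_matching
    (hmatch : ∀ v, ReachWithout E t s v ↔ CoReachWithout E s v t)
    (hw : ReachWithout E t s w) (hws : w ≠ s) (hvw : E v w) : ReachWithout E t s v :=
  (hmatch v).2 (((hmatch w).1 hw).of_edge hws hvw)

end Reach

section Tree

variable {V : Type*} {T : V → V → Prop} {U : Set V} {root s v : V}

theorem reflTransGen_of_mem_of_parent_mem (hparent : ∀ a b, T a b → b ∈ U → b ≠ s → a ∈ U)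
    (hroot : root ∈ U → ReflTransGen T s root) (h : ReflTransGen T root v) (hv : v ∈ U) :
    ReflTransGen T s v := by
  induction h with
  | refl => exact hroot hv
  | @tail a b _ hab ih =>
    by_cases hbs : b = s
    · exact hbs ▸ .refl
    · exact (ih (hparent a b hab hv hbs)).tail hab

end Tree

section Superbubble

variable {V : Type*} {E T : V → V → Prop} {ordD : V → ℕ} {s t : V}

theorem reachWithout_of_reflTransGen_of_le (hTE : ∀ a b, T a b → E a b)
    (htopo : ∀ a b, E a b → ordD a < ordD b) {y : V} (hsy : ReflTransGen T s y)
    (hyt : ordD y ≤ ordD t) : ReachWithout E t s y := by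
  rcases hsy.cases_tail with rfl | ⟨w, hsw, hwy⟩
  · exact .inl rfl
  have hTord : ∀ a b, T a b → ordD a < ordD b := fun a b h => htopo a b (hTE a b h)
  have hsw' := reflTransGen_ne_of_lt_of_strictMono hTord hsw ((hTord w y hwy).trans_le hyt)
  exact .inr ⟨w, ReflTransGen.mono (fun _ _ hab => ⟨hTE _ _ hab.1, hab.2⟩) _ _ hsw', hTE w y hwy⟩

theorem reflTransGen_of_reachWithout_of_matching
    (hmatch : ∀ v, ReachWithout E t s v ↔ CoReachWithout E s v t) (hTE : ∀ a b, T a b → E a b)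
    (htopo : ∀ a b, E a b → ordD a < ordD b) {root : V}
    (hSpan : ∀ v, ReflTransGen T root v) {k : ℕ}
    (hk : ∀ x, ReflTransGen T s x ↔ ordD s ≤ ordD x ∧ ordD x ≤ k) {v : V}
    (hv : ReachWithout E t s v) : ReflTransGen T s v := by
  -- a root inside `U` has `ordD root = ordD s`, so it falls in the order interval of `s`
  refine reflTransGen_of_mem_of_parent_mem (U := {v | ReachWithout E t s v})
    (fun a b hab hb hbs => hb.of_edge_of_matching hmatch hbs (hTE a b hab))
    (fun hroot => (hk root).2 ⟨?_, ?_⟩) (hSpan v) hv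
  · exact le_of_reflTransGen_of_strictMono htopo hroot.reflTransGen
  · calc ordD root ≤ ordD s :=
          le_of_reflTransGen_of_strictMono (fun a b h => htopo a b (hTE a b h)) (hSpan s)
      _ ≤ k := ((hk s).1 .refl).2

end Superbubble

theorem superbubble_exterior_order_general {V : Type*} (E T : V → V → Prop) (root : V)
    (hTE : ∀ a b, T a b → E a b)
    (hSpan : ∀ v, Relation.ReflTransGen T root v)
    (ordD : V → ℕ)
    (htopo : ∀ a b, E a b → ordD a < ordD b)
    (hInterval : ∀ v : V, ∃ k : ℕ, ∀ x : V,
      Relation.ReflTransGen T v x ↔ ordD v ≤ ordD x ∧ ordD x ≤ k)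
    (s t : V) (hSB : Superbubble E s t)
    (y : V) (hyU : ¬ ReachWithout E t s y) :
    ordD y < ordD s ∨ ordD t < ordD y := by
  obtain ⟨⟨-, hreach, hmatch, -⟩, -⟩ := hSB
  obtain ⟨k, hk⟩ := hInterval s
  have hst : ReflTransGen T s t := reflTransGen_of_reachWithout_of_matching hmatch hTE htopo
    hSpan hk (.avoid_of_reflTransGen hreach.to_reflTransGen)
  by_contra! ⟨hsy, hyt⟩
  have hy : ReflTransGen T s y := (hk y).2 ⟨hsy, hyt.trans ((hk t).1 hst).2⟩
  exact hyU (reachWithout_of_reflTransGen_of_le hTE htopo hy hyt)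

/-- Let ⟨s, t⟩ be a superbubble with vertex set U in a DAG with a single source and
single sink, and let ordD be a topological ordering produced by depth-first topological
sort (its spanning tree T assigns contiguous order intervals to subtrees). Then every
vertex not in U has order smaller than that of s or greater than that of t. -/
theorem superbubble_exterior_order {V : Type*} [Fintype V] (E T : V → V → Prop) (root : V)
    (hA : Acyclic E)
    (hSource : ∃! r : V, ∀ u, ¬ E u r)
    (hSink : ∃! q : V, ∀ u, ¬ E q u)
    (hTE : ∀ a b, T a b → E a b)
    (hRoot : ∀ u, ¬ E u root)
    (hSpan : ∀ v, Relation.ReflTransGen T root v)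
    (ordD : V → ℕ) (hinj : Function.Injective ordD)
    (htopo : ∀ a b, E a b → ordD a < ordD b)
    (hInterval : ∀ v : V, ∃ k : ℕ, ∀ x : V,
      Relation.ReflTransGen T v x ↔ ordD v ≤ ordD x ∧ ordD x ≤ k)
    (s t : V) (hSB : Superbubble E s t)
    (y : V) (hyU : ¬ ReachWithout E t s y) :
    ordD y < ordD s ∨ ordD t < ordD y :=
  superbubble_exterior_order_general E T root hTE hSpan ordD htopo hInterval s t hSB y hyU
end

section
/- Let G be a directed acyclic graph with a topological ordering ordD, and for each vertex v define OutParent[ordD[v]] = min{ordD[u] : (u, v) ∈ E} and OutChild[ordD[v]] = max{ordD[u] : (v, u) ∈ E}. If ⟨s, t⟩ is a superbubble whose vertex set U consists exactly of the vertices with order in [ordD[s], ordD[t]], then min{OutParent[k] : ordD[s]+1 ≤ k ≤ ordD[t]} = ordD[s] and max{OutChild[k] : ordD[s] ≤ k ≤ ordD[t]−1} = ordD[t]. -/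
/-- If ⟨s, t⟩ is a superbubble whose vertex set is exactly the set of vertices with
topological order in [ordD s, ordD t], then the minimum of OutParent over orders in
(ordD s, ordD t] is ordD s, and the maximum of OutChild over orders in
[ordD s, ordD t) is ordD t. -/
theorem superbubble_range_min_max {V : Type*} [Fintype V] (E : V → V → Prop)
    (hA : Acyclic E)
    (ordD : V → ℕ) (hinj : Function.Injective ordD)
    (htopo : ∀ a b, E a b → ordD a < ordD b)
    (OutParent OutChild : ℕ → ℕ)
    (hOPle : ∀ v u : V, E u v → OutParent (ordD v) ≤ ordD u)
    (hOPmem : ∀ v : V, (∃ u, E u v) → ∃ u, E u v ∧ OutParent (ordD v) = ordD u)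
    (hOCle : ∀ v u : V, E v u → ordD u ≤ OutChild (ordD v))
    (hOCmem : ∀ v : V, (∃ u, E v u) → ∃ u, E v u ∧ OutChild (ordD v) = ordD u)
    (s t : V) (hSB : Superbubble E s t)
    (hU : {v : V | ReachWithout E t s v} = {v : V | ordD s ≤ ordD v ∧ ordD v ≤ ordD t}) :
    IsLeast {x : ℕ | ∃ v : V, ordD s < ordD v ∧ ordD v ≤ ordD t ∧ OutParent (ordD v) = x}
      (ordD s) ∧
    IsGreatest {x : ℕ | ∃ v : V, ordD s ≤ ordD v ∧ ordD v < ordD t ∧ OutChild (ordD v) = x}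
      (ordD t) := by
  obtain ⟨⟨hst, hreach, hmatch, hacyc⟩, hmin⟩ := hSB
  have hU' : ∀ v, ReachWithout E t s v ↔ (ordD s ≤ ordD v ∧ ordD v ≤ ordD t) :=
    fun v => Set.ext_iff.mp hU v
  -- parent closure: parents of vertices of U other than s lie in U
  have L1 : ∀ v u, ReachWithout E t s v → v ≠ s → E u v → ReachWithout E t s u := by
    intro v u hv hvs huv
    have hco : CoReachWithout E s v t := (hmatch v).mp hv
    apply (hmatch u).mpr
    rcases hco with heq | ⟨w, hvw, hwt⟩
    · exact Or.inr ⟨v, huv, by rw [heq]⟩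
    · exact Or.inr ⟨v, huv, Relation.ReflTransGen.head ⟨hvw, hvs⟩ hwt⟩
  -- child closure: children of vertices of U other than t lie in U
  have L2 : ∀ v u, ReachWithout E t s v → v ≠ t → E v u → ReachWithout E t s u := by
    intro v u hv hvt hvu
    rcases hv with rfl | ⟨w, hsw, hwv⟩
    · exact Or.inr ⟨s, Relation.ReflTransGen.refl, hvu⟩
    · exact Or.inr ⟨v, Relation.ReflTransGen.tail hsw ⟨hwv, hvt⟩, hvu⟩
  -- lower bound for OutParent values
  have hlb : ∀ x ∈ {x : ℕ | ∃ v : V, ordD s < ordD v ∧ ordD v ≤ ordD t ∧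
      OutParent (ordD v) = x}, ordD s ≤ x := by
    rintro x ⟨v, h1, h2, h3⟩
    have hvU : ReachWithout E t s v := (hU' v).mpr ⟨le_of_lt h1, h2⟩
    have hvs : v ≠ s := fun h => by subst h; exact lt_irrefl _ h1
    have hpar : ∃ u, E u v := by
      rcases hvU with rfl | ⟨w, _, hwv⟩
      · exact absurd rfl hvs
      · exact ⟨w, hwv⟩
    obtain ⟨u, huv, hop⟩ := hOPmem v hpar
    have h4 := ((hU' u).mp (L1 v u hvU hvs huv)).1
    omega
  -- upper bound for OutChild values
  have hub : ∀ x ∈ {x : ℕ | ∃ v : V, ordD s ≤ ordD v ∧ ordD v < ordD t ∧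
      OutChild (ordD v) = x}, x ≤ ordD t := by
    rintro x ⟨v, h1, h2, h3⟩
    have hvU : ReachWithout E t s v := (hU' v).mpr ⟨h1, le_of_lt h2⟩
    have hvt : v ≠ t := fun h => by subst h; exact lt_irrefl _ h2
    have hchild : ∃ u, E v u := by
      rcases (hmatch v).mp hvU with heq | ⟨w, hvw, _⟩
      · exact absurd heq hvt
      · exact ⟨w, hvw⟩
    obtain ⟨u, hvu, hoc⟩ := hOCmem v hchild
    have h4 := ((hU' u).mp (L2 v u hvU hvt hvu)).2
    omega
  -- a first edge out of s
  obtain ⟨w1, hsw1⟩ : ∃ w, E s w := by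
    obtain ⟨c, hc, -⟩ := Relation.TransGen.head'_iff.mp hreach
    exact ⟨c, hc⟩
  have hw1U : ReachWithout E t s w1 := Or.inr ⟨s, Relation.ReflTransGen.refl, hsw1⟩
  have hmem1 : ordD s ∈ {x : ℕ | ∃ v : V, ordD s < ordD v ∧ ordD v ≤ ordD t ∧
      OutParent (ordD v) = x} := by
    refine ⟨w1, htopo s w1 hsw1, ((hU' w1).mp hw1U).2, le_antisymm (hOPle w1 s hsw1) ?_⟩
    exact hlb _ ⟨w1, htopo s w1 hsw1, ((hU' w1).mp hw1U).2, rfl⟩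
  -- a last edge into t whose source is in U
  obtain ⟨w2, hsw2, hw2t⟩ : ∃ c, Relation.ReflTransGen E s c ∧ E c t :=
    Relation.TransGen.tail'_iff.mp hreach
  have haux : ∀ a, Relation.ReflTransGen E s a → Relation.TransGen E a t →
      Relation.ReflTransGen (fun a b => E a b ∧ b ≠ t) s a := by
    intro a h
    induction h with
    | refl => intro _; exact Relation.ReflTransGen.refl
    | @tail b c h1 h2 ih =>
      intro hct
      exact Relation.ReflTransGen.tail (ih (Relation.TransGen.head h2 hct))
        ⟨h2, fun h => hA t (h ▸ hct)⟩
  have hw2r := haux w2 hsw2 (Relation.TransGen.single hw2t)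
  have hw2U : ReachWithout E t s w2 := by
    rcases hw2r.cases_tail with h | ⟨c, hc, hcw⟩
    · exact Or.inl h.symm
    · exact Or.inr ⟨c, hc, hcw.1⟩
  have hmem2 : ordD t ∈ {x : ℕ | ∃ v : V, ordD s ≤ ordD v ∧ ordD v < ordD t ∧
      OutChild (ordD v) = x} := by
    refine ⟨w2, ((hU' w2).mp hw2U).1, htopo w2 t hw2t, le_antisymm ?_ (hOCle w2 t hw2t)⟩
    exact hub _ ⟨w2, ((hU' w2).mp hw2U).1, htopo w2 t hw2t, rfl⟩
  exact ⟨⟨hmem1, hlb⟩, ⟨hmem2, hub⟩⟩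
end

section
/- Let G be a DAG with single source and single sink, ordD a topological ordering, and s, t vertices with ordD[s] < ordD[t]. Suppose (i) every vertex v with ordD[s] < ordD[v] ≤ ordD[t] has all its parents u satisfying ordD[u] ≥ ordD[s], i.e., min over these v of OutParent equals ordD[s]; and (ii) every vertex v with ordD[s] ≤ ordD[v] < ordD[t] has all its children u satisfying ordD[u] ≤ ordD[t], i.e., max over these v of OutChild equals ordD[t]. Then t is reachable from s, and the set of vertices reachable from s without passing through t equals the set of vertices from which t is reachable without passing through s, namely the set of all vertices v with ordD[s] ≤ ordD[v] ≤ ordD[t]. -/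
/-!
Along every edge the rank `ordD` strictly increases. Walking backwards from a vertex `v` with
`ordD s < ordD v ≤ ordD t` along parents (which exist, since the unique source has rank at most
`ordD s`) stays in the rank interval by (i) and ends at `s`; this gives a path from `s` to `v`
that avoids `t`. Conversely, a path from `s` that avoids `t` can never leave the interval by (ii).
Reversing all edges swaps the two conditions, so the same argument describes the vertices
reaching `t` while avoiding `s`, and both sets are the rank interval `[ordD s, ordD t]`.
-/

open Relation Function Set

section Rank

variable {V α : Type*} [LinearOrder α] {E : V → V → Prop} {f : V → α}

theorem Relation.ReflTransGen.rank_le (hf : ∀ a b, E a b → f a < f b) {a b : V}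
    (h : ReflTransGen E a b) : f a ≤ f b := by
  induction h with
  | refl => exact le_rfl
  | tail _ hbc ih => exact ih.trans (hf _ _ hbc).le

theorem wellFounded_rank_lt [Finite V] (f : V → α) : WellFounded (fun u v => f u < f v) :=
  Finite.wellFounded_of_trans_of_irrefl _

theorem reflTransGen_of_unique_source [Finite V] (hf : ∀ a b, E a b → f a < f b) {r : V}
    (hr : ∀ v, (∀ u, ¬ E u v) → v = r) (v : V) : ReflTransGen E r v := by
  induction v using (wellFounded_rank_lt f).induction with
  | _ v ih =>
    by_cases hpar : ∃ u, E u v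
    · obtain ⟨u, hu⟩ := hpar
      exact (ih u (hf u v hu)).tail hu
    · push Not at hpar
      rw [hr v hpar]

theorem reflTransGen_of_unique_sink [Finite V] (hf : ∀ a b, E a b → f a < f b) {q : V}
    (hq : ∀ v, (∀ u, ¬ E v u) → v = q) (v : V) : ReflTransGen E v q :=
  reflTransGen_swap.mp <| reflTransGen_of_unique_source (E := swap E) (f := OrderDual.toDual ∘ f)
    (fun a b hab => hf b a hab) hq v

end Rank

section ReachWithout

variable {V : Type*} {E : V → V → Prop}

theorem ReachWithout.transGen {a s v : V} (h : ReachWithout E a s v) (hsv : s ≠ v) :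
    TransGen E s v := by
  rcases h with rfl | ⟨w, hsw, hwv⟩
  · exact absurd rfl hsv
  · exact TransGen.tail' (ReflTransGen.mono (fun _ _ hab => hab.1) _ _ hsw) hwv

theorem coReachWithout_iff_reachWithout_swap {a v t : V} :
    CoReachWithout E a v t ↔ ReachWithout (swap E) a t v := by
  unfold CoReachWithout ReachWithout
  simp only [eq_comm (a := v), swap]
  refine or_congr_right (exists_congr fun w => ?_)
  rw [and_comm, ← reflTransGen_swap]

variable {α : Type*} [LinearOrder α] {f : V → α} {s t : V}

theorem rank_mem_Icc_of_reachWithout (hf : ∀ a b, E a b → f a < f b) (hinj : Injective f)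
    (hst : f s < f t)
    (hchild : ∀ v u, f s ≤ f v → f v < f t → E v u → f u ≤ f t) {v : V}
    (hv : ReachWithout E t s v) : f v ∈ Icc (f s) (f t) := by
  have hpath : ∀ w, ReflTransGen (fun a b => E a b ∧ b ≠ t) s w → f w ∈ Ico (f s) (f t) := by
    intro w hw
    induction hw with
    | refl => exact ⟨le_rfl, hst⟩
    | tail _ hbc ih =>
      obtain ⟨hE, hne⟩ := hbc
      exact ⟨ih.1.trans (hf _ _ hE).le,
        (hchild _ _ ih.1 ih.2 hE).lt_of_ne fun h => hne (hinj h)⟩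
  rcases hv with rfl | ⟨w, hsw, hwv⟩
  · exact ⟨le_rfl, hst.le⟩
  · obtain ⟨h₁, h₂⟩ := hpath w hsw
    exact ⟨h₁.trans (hf _ _ hwv).le, hchild _ _ h₁ h₂ hwv⟩

theorem reachWithout_of_rank_mem_Icc [Finite V] (hf : ∀ a b, E a b → f a < f b)
    (hinj : Injective f)
    (hpar_ex : ∀ v, f s < f v → f v ≤ f t → ∃ u, E u v)
    (hpar : ∀ v u, f s < f v → f v ≤ f t → E u v → f s ≤ f u) {v : V}
    (hv : f v ∈ Icc (f s) (f t)) : ReachWithout E t s v := by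
  induction v using (wellFounded_rank_lt f).induction with
  | _ v ih =>
    obtain ⟨hsv, hvt⟩ := hv
    rcases hsv.eq_or_lt with hsv | hsv
    · exact Or.inl (hinj hsv)
    obtain ⟨u, hu⟩ := hpar_ex v hsv hvt
    have hut : f u < f t := (hf u v hu).trans_le hvt
    refine Or.inr ⟨u, ?_, hu⟩
    rcases ih u (hf u v hu) ⟨hpar v u hsv hvt hu, hut.le⟩ with rfl | ⟨w, hsw, hwu⟩
    · exact ReflTransGen.refl
    · exact hsw.tail ⟨hwu, fun h => hut.ne (congrArg f h)⟩

theorem rank_mem_Icc_of_coReachWithout (hf : ∀ a b, E a b → f a < f b) (hinj : Injective f)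
    (hst : f s < f t)
    (hpar : ∀ v u, f s < f v → f v ≤ f t → E u v → f s ≤ f u) {v : V}
    (hv : CoReachWithout E s v t) : f v ∈ Icc (f s) (f t) := by
  obtain ⟨hvt, hsv⟩ := rank_mem_Icc_of_reachWithout (E := swap E) (f := OrderDual.toDual ∘ f)
    (fun a b hab => hf b a hab) (OrderDual.toDual.injective.comp hinj) hst
    (fun v u h₁ h₂ huv => hpar v u h₂ h₁ huv) (coReachWithout_iff_reachWithout_swap.mp hv)
  exact ⟨hsv, hvt⟩

theorem coReachWithout_of_rank_mem_Icc [Finite V] (hf : ∀ a b, E a b → f a < f b)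
    (hinj : Injective f)
    (hchild_ex : ∀ v, f s ≤ f v → f v < f t → ∃ u, E v u)
    (hchild : ∀ v u, f s ≤ f v → f v < f t → E v u → f u ≤ f t) {v : V}
    (hv : f v ∈ Icc (f s) (f t)) : CoReachWithout E s v t :=
  coReachWithout_iff_reachWithout_swap.mpr <|
    reachWithout_of_rank_mem_Icc (E := swap E) (f := OrderDual.toDual ∘ f)
      (fun a b hab => hf b a hab) (OrderDual.toDual.injective.comp hinj)
      (fun v h₁ h₂ => hchild_ex v h₂ h₁) (fun v u h₁ h₂ huv => hchild v u h₂ h₁ huv)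
      ⟨hv.2, hv.1⟩

end ReachWithout

theorem validate_superbubble_general {V : Type*} [Fintype V] (E : V → V → Prop)
    (hSource : ∃! r : V, ∀ u, ¬ E u r)
    (hSink : ∃! q : V, ∀ u, ¬ E q u)
    (ordD : V → ℕ) (hinj : Function.Injective ordD)
    (htopo : ∀ a b, E a b → ordD a < ordD b)
    (s t : V) (hst : ordD s < ordD t)
    (hParAll : ∀ v u : V, ordD s < ordD v → ordD v ≤ ordD t → E u v → ordD s ≤ ordD u)
    (hChildAll : ∀ v u : V, ordD s ≤ ordD v → ordD v < ordD t → E v u → ordD u ≤ ordD t) :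
    Relation.TransGen E s t ∧
    {v : V | ReachWithout E t s v} = {v : V | CoReachWithout E s v t} ∧
    {v : V | ReachWithout E t s v} = {v : V | ordD s ≤ ordD v ∧ ordD v ≤ ordD t} := by
  obtain ⟨r, -, hr⟩ := hSource
  obtain ⟨q, -, hq⟩ := hSink
  have hpar_ex : ∀ v, ordD s < ordD v → ordD v ≤ ordD t → ∃ u, E u v := by
    intro v hsv _
    by_contra! hv
    have := ((reflTransGen_of_unique_source htopo hr s).rank_le htopo).trans_lt hsv
    exact this.ne (congrArg ordD (hr v hv)).symm
  have hchild_ex : ∀ v, ordD s ≤ ordD v → ordD v < ordD t → ∃ u, E v u := by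
    intro v _ hvt
    by_contra! hv
    have := hvt.trans_le ((reflTransGen_of_unique_sink htopo hq t).rank_le htopo)
    exact this.ne (congrArg ordD (hq v hv))
  have hReach : ∀ v, ReachWithout E t s v ↔ ordD v ∈ Icc (ordD s) (ordD t) := fun v =>
    ⟨rank_mem_Icc_of_reachWithout htopo hinj hst hChildAll,
      reachWithout_of_rank_mem_Icc htopo hinj hpar_ex hParAll⟩
  have hCoReach : ∀ v, CoReachWithout E s v t ↔ ordD v ∈ Icc (ordD s) (ordD t) := fun v =>
    ⟨rank_mem_Icc_of_coReachWithout htopo hinj hst hParAll,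
      coReachWithout_of_rank_mem_Icc htopo hinj hchild_ex hChildAll⟩
  refine ⟨((hReach t).mpr ⟨hst.le, le_rfl⟩).transGen fun h => hst.ne (congrArg ordD h), ?_, ?_⟩
  · ext v
    exact (hReach v).trans (hCoReach v).symm
  · ext v
    exact hReach v

/-- In a DAG with a single source and single sink, if every vertex with order in
(ordD s, ordD t] has all parents of order ≥ ordD s (with ordD s attained), and every
vertex with order in [ordD s, ordD t) has all children of order ≤ ordD t (with ordD t
attained), then t is reachable from s and the set of vertices reachable from s without
passing through t equals the set of vertices from which t is reachable without passing
through s, namely all vertices with order in [ordD s, ordD t]. -/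
theorem validate_superbubble {V : Type*} [Fintype V] (E : V → V → Prop)
    (hA : Acyclic E)
    (hSource : ∃! r : V, ∀ u, ¬ E u r)
    (hSink : ∃! q : V, ∀ u, ¬ E q u)
    (ordD : V → ℕ) (hinj : Function.Injective ordD)
    (htopo : ∀ a b, E a b → ordD a < ordD b)
    (s t : V) (hst : ordD s < ordD t)
    (hParAll : ∀ v u : V, ordD s < ordD v → ordD v ≤ ordD t → E u v → ordD s ≤ ordD u)
    (hParMin : ∃ v u : V, ordD s < ordD v ∧ ordD v ≤ ordD t ∧ E u v ∧ ordD u = ordD s)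
    (hChildAll : ∀ v u : V, ordD s ≤ ordD v → ordD v < ordD t → E v u → ordD u ≤ ordD t)
    (hChildMax : ∃ v u : V, ordD s ≤ ordD v ∧ ordD v < ordD t ∧ E v u ∧ ordD u = ordD t) :
    Relation.TransGen E s t ∧
    {v : V | ReachWithout E t s v} = {v : V | CoReachWithout E s v t} ∧
    {v : V | ReachWithout E t s v} = {v : V | ordD s ≤ ordD v ∧ ordD v ≤ ordD t} :=
  validate_superbubble_general E hSource hSink ordD hinj htopo s t hst hParAll hChildAll
end

section
/- Adding a new source vertex r' with edges to all existing sources of a DAG G, and a new sink t' with edges from all existing sinks, preserves superbubbles: any pair ⟨s, t⟩ of original vertices is a superbubble in the augmented graph if and only if it is a superbubble in G. -/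
/-- The edge relation of the augmented graph: a new source (none) with edges to all
sources of E, and a new sink (some none) with edges from all sinks of E; original
vertices are embedded as some (some v). -/
def augE {V : Type*} (E : V → V → Prop) : Option (Option V) → Option (Option V) → Prop
  | some (some x), some (some y) => E x y
  | none, some (some x) => ∀ u, ¬ E u x
  | some (some x), some none => ∀ u, ¬ E x u
  | _, _ => False

/-!
The new source has no in-edges and the new sink no out-edges, so a path between original
vertices never passes through them: reachability avoiding `s` or `t` is unchanged among the
original vertices. The new vertices never enter the matched sets either. The new source is
not reachable at all, and the new sink could only be reached through a sink of `G` lying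
inside the bubble, which matching forbids since every vertex inside reaches `t`; dually for
co-reachability. Acyclicity of `G`, hence of the augmented graph, makes the acyclicity
condition automatic on both sides.
-/

open Relation

section Augmentation

variable {V : Type*} {E : V → V → Prop}

lemma Acyclic.acyclicOn (hA : Acyclic E) (U : Set V) : AcyclicOn E U :=
  fun v h => hA v (TransGen.mono (fun _ _ hab => hab.1) _ _ h)

lemma not_augE_none (a : Option (Option V)) : ¬ augE E a none := by
  rcases a with _ | _ | a <;> simp [augE]

lemma not_augE_some_none (b : Option (Option V)) : ¬ augE E (some none) b := by
  rcases b with _ | _ | b <;> simp [augE]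

section SubAugE

variable {r : Option (Option V) → Option (Option V) → Prop} (hr : ∀ a b, r a b → augE E a b)
include hr

lemma not_transGen_none (a : Option (Option V)) : ¬ TransGen r a none := fun h =>
  have ⟨c, _, hc⟩ := TransGen.tail'_iff.mp h
  not_augE_none c (hr _ _ hc)

lemma not_transGen_some_none (b : Option (Option V)) : ¬ TransGen r (some none) b := fun h =>
  have ⟨c, hc, _⟩ := TransGen.head'_iff.mp h
  not_augE_some_none c (hr _ _ hc)

lemma transGen_some_some_iff {a b : V} :
    TransGen r (some (some a)) (some (some b)) ↔
      TransGen (fun x y => r (some (some x)) (some (some y))) a b := by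
  refine ⟨fun h => ?_, fun h => h.lift _ fun _ _ => id⟩
  generalize ha : some (some a) = x at h
  induction h using TransGen.head_induction_on generalizing a with
  | single hab => subst ha; exact .single hab
  | @head x c hxc hcb ih =>
    subst ha
    rcases c with _ | _ | c
    · exact absurd (hr _ _ hxc) (not_augE_none _)
    · exact absurd hcb (not_transGen_some_none hr _)
    · exact (ih rfl).head hxc

lemma reflTransGen_some_some_iff {a b : V} :
    ReflTransGen r (some (some a)) (some (some b)) ↔
      ReflTransGen (fun x y => r (some (some x)) (some (some y))) a b := by
  simp only [reflTransGen_iff_eq_or_transGen, transGen_some_some_iff hr, Option.some.injEq]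

lemma reflTransGen_none_right {a : Option (Option V)} (h : ReflTransGen r a none) : a = none :=
  (reflTransGen_iff_eq_or_transGen.mp h).elim Eq.symm fun h => absurd h (not_transGen_none hr a)

lemma reflTransGen_some_none_left {b : Option (Option V)} (h : ReflTransGen r (some none) b) :
    b = some none :=
  (reflTransGen_iff_eq_or_transGen.mp h).elim id fun h => absurd h (not_transGen_some_none hr b)

end SubAugE

lemma acyclic_augE (hA : Acyclic E) : Acyclic (augE E) := by
  rintro (_ | _ | x) h
  · exact not_transGen_none (fun _ _ => id) _ h
  · exact not_transGen_some_none (fun _ _ => id) _ h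
  · exact hA x ((transGen_some_some_iff fun _ _ => id).mp h)

lemma transGen_augE_iff {a b : V} :
    TransGen (augE E) (some (some a)) (some (some b)) ↔ TransGen E a b :=
  transGen_some_some_iff fun _ _ => id

variable {s t : V}

lemma reachWithout_augE_iff {v : V} :
    ReachWithout (augE E) (some (some t)) (some (some s)) (some (some v)) ↔
      ReachWithout E t s v := by
  have hr : ∀ a b, augE E a b ∧ b ≠ some (some t) → augE E a b := fun _ _ h => h.1
  unfold ReachWithout
  simp only [Option.some.injEq]
  refine or_congr_right ⟨?_, fun ⟨w, hw, he⟩ => ⟨some (some w), ?_, he⟩⟩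
  · rintro ⟨_ | _ | w, hw, he⟩
    · exact absurd (reflTransGen_none_right hr hw) (by simp)
    · exact absurd he (not_augE_some_none _)
    · exact ⟨w, by simpa [augE] using (reflTransGen_some_some_iff hr).mp hw, he⟩
  · exact (reflTransGen_some_some_iff hr).mpr (by simpa [augE] using hw)

lemma coReachWithout_augE_iff {v : V} :
    CoReachWithout (augE E) (some (some s)) (some (some v)) (some (some t)) ↔
      CoReachWithout E s v t := by
  have hr : ∀ a b, augE E a b ∧ a ≠ some (some s) → augE E a b := fun _ _ h => h.1
  unfold CoReachWithout
  simp only [Option.some.injEq]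
  refine or_congr_right ⟨?_, fun ⟨w, he, hw⟩ => ⟨some (some w), he, ?_⟩⟩
  · rintro ⟨_ | _ | w, he, hw⟩
    · exact absurd he (not_augE_none _)
    · exact absurd (reflTransGen_some_none_left hr hw) (by simp)
    · exact ⟨w, he, by simpa [augE] using (reflTransGen_some_some_iff hr).mp hw⟩
  · exact (reflTransGen_some_some_iff hr).mpr (by simpa [augE] using hw)

lemma not_reachWithout_augE_none : ¬ ReachWithout (augE E) (some (some t)) (some (some s)) none
  | .inl h => nomatch h
  | .inr ⟨w, _, he⟩ => not_augE_none w he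

lemma not_coReachWithout_augE_some_none :
    ¬ CoReachWithout (augE E) (some (some s)) (some none) (some (some t))
  | .inl h => nomatch h
  | .inr ⟨w, he, _⟩ => not_augE_some_none w he

lemma SBCore.exists_out_edge (h : SBCore E s t) {x : V}
    (hx : ReflTransGen (fun a b => E a b ∧ b ≠ t) s x) : ∃ u, E x u := by
  obtain ⟨hst, -, hmatch, -⟩ := h
  have hreach : x ≠ t ∧ ReachWithout E t s x := by
    rcases hx.cases_tail with rfl | ⟨c, hc, hcx⟩
    · exact ⟨hst, .inl rfl⟩
    · exact ⟨hcx.2, .inr ⟨c, hc, hcx.1⟩⟩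
  rcases (hmatch x).mp hreach.2 with hxt | ⟨u, hu, -⟩
  · exact absurd hxt hreach.1
  · exact ⟨u, hu⟩

lemma SBCore.exists_in_edge (h : SBCore E s t) {x : V}
    (hx : ReflTransGen (fun a b => E a b ∧ a ≠ s) x t) : ∃ u, E u x := by
  obtain ⟨-, hst, hmatch, -⟩ := h
  rcases hx.cases_head with rfl | ⟨c, hxc, hct⟩
  · obtain ⟨u, -, hu⟩ := TransGen.tail'_iff.mp hst
    exact ⟨u, hu⟩
  · rcases (hmatch x).mpr (.inr ⟨c, hxc.1, hct⟩) with rfl | ⟨u, -, hu⟩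
    · exact absurd rfl hxc.2
    · exact ⟨u, hu⟩

lemma SBCore.not_reachWithout_augE_some_none (h : SBCore E s t) :
    ¬ ReachWithout (augE E) (some (some t)) (some (some s)) (some none) := by
  rintro (h' | ⟨_ | _ | w, hw, he⟩)
  · exact nomatch h'
  · exact he
  · exact not_augE_some_none _ he
  · obtain ⟨u, hu⟩ := h.exists_out_edge <| by
      simpa [augE] using (reflTransGen_some_some_iff fun _ _ h => h.1).mp hw
    exact he u hu

lemma SBCore.not_coReachWithout_augE_none (h : SBCore E s t) :
    ¬ CoReachWithout (augE E) (some (some s)) none (some (some t)) := by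
  rintro (h' | ⟨_ | _ | w, he, hw⟩)
  · exact nomatch h'
  · exact not_augE_none _ he
  · exact he
  · obtain ⟨u, hu⟩ := h.exists_in_edge <| by
      simpa [augE] using (reflTransGen_some_some_iff fun _ _ h => h.1).mp hw
    exact he u hu

lemma sbCore_augE_iff (hA : Acyclic E) :
    SBCore (augE E) (some (some s)) (some (some t)) ↔ SBCore E s t := by
  refine ⟨fun ⟨hst, hreach, hmatch, _⟩ => ⟨?_, ?_, fun v => ?_, hA.acyclicOn _⟩,
    fun h => ⟨?_, ?_, ?_, (acyclic_augE hA).acyclicOn _⟩⟩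
  · exact fun h => hst (congrArg _ (congrArg _ h))
  · exact transGen_augE_iff.mp hreach
  · rw [← reachWithout_augE_iff, ← coReachWithout_augE_iff]; exact hmatch _
  · simpa using h.1
  · exact transGen_augE_iff.mpr h.2.1
  · rintro (_ | _ | v)
    · exact iff_of_false not_reachWithout_augE_none h.not_coReachWithout_augE_none
    · exact iff_of_false h.not_reachWithout_augE_some_none not_coReachWithout_augE_some_none
    · rw [reachWithout_augE_iff, coReachWithout_augE_iff]; exact h.2.2.1 v

end Augmentation

theorem augmentation_preserves_superbubbles_general {V : Type*} (E : V → V → Prop)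
    (hA : Acyclic E) (s t : V) :
    Superbubble (augE E) (some (some s)) (some (some t)) ↔ Superbubble E s t := by
  refine ⟨fun ⟨hcore, hmin⟩ => ⟨(sbCore_augE_iff hA).mp hcore, fun t' hr hne hc => ?_⟩,
    fun ⟨hcore, hmin⟩ => ⟨(sbCore_augE_iff hA).mpr hcore, ?_⟩⟩
  · exact hmin (some (some t')) (reachWithout_augE_iff.mpr hr) (by simpa using hne)
      ((sbCore_augE_iff hA).mpr hc)
  · rintro (_ | _ | t') hr hne hc
    · exact not_reachWithout_augE_none hr
    · exact hcore.not_reachWithout_augE_some_none hr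
    · exact hmin t' (reachWithout_augE_iff.mp hr) (by simpa using hne)
        ((sbCore_augE_iff hA).mp hc)

/-- Adding a new source with edges to all sources and a new sink with edges from all
sinks preserves superbubbles on the original vertices. -/
theorem augmentation_preserves_superbubbles {V : Type*} [Fintype V] (E : V → V → Prop)
    (hA : Acyclic E) (s t : V) :
    Superbubble (augE E) (some (some s)) (some (some t)) ↔ Superbubble E s t :=
  augmentation_preserves_superbubbles_general E hA s t
end

section
/- In a directed acyclic graph with n vertices, the number of distinct superbubbles is at most n − 1. -/
section

open Relation

variable {V : Type*} {E : V → V → Prop}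

section ReachWithout

-- `ReachWithout E c a b` and `CoReachWithout E c a b` both say that some path from `a` to `b`
-- has no interior vertex `c`; they differ only in which end of the path is peeled off.
theorem reachWithout_iff_coReachWithout {c a b : V} :
    ReachWithout E c a b ↔ CoReachWithout E c a b := by
  refine or_congr Iff.rfl ⟨?_, ?_⟩ <;> rintro ⟨w, haw, hwb⟩
  · induction haw generalizing b with
    | refl => exact ⟨b, hwb, .refl⟩
    | tail _ hyw ih =>
      obtain ⟨w', haw', hw'w⟩ := ih hyw.1
      exact ⟨w', haw', hw'w.tail ⟨hwb, hyw.2⟩⟩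
  · induction hwb using ReflTransGen.head_induction_on generalizing a with
    | refl => exact ⟨a, .refl, haw⟩
    | head hwy _ ih =>
      obtain ⟨w', hyw', hw'b⟩ := ih hwy.1
      exact ⟨w', .head ⟨haw, hwy.2⟩ hyw', hw'b⟩

theorem ReachWithout.reflTransGen_s14 {c a b : V} (h : ReachWithout E c a b) :
    ReflTransGen E a b := by
  rcases h with rfl | ⟨w, haw, hwb⟩
  · exact .refl
  · exact (ReflTransGen.mono (fun _ _ h => h.1) _ _ haw).tail hwb

theorem ReachWithout.trans {c a b d : V} (hab : ReachWithout E c a b)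
    (hbd : ReachWithout E c b d) (hb : b ≠ c) : ReachWithout E c a d := by
  rcases hab with rfl | ⟨w, haw, hwb⟩
  · exact hbd
  rcases hbd with rfl | ⟨w', hbw', hw'd⟩
  · exact .inr ⟨w, haw, hwb⟩
  · exact .inr ⟨w', (haw.tail ⟨hwb, hb⟩).trans hbw', hw'd⟩

theorem reflTransGen_ne_or_reachWithout {c a w : V}
    (h : ReflTransGen (fun x y => E x y ∧ y ≠ c) a w) (d : V) :
    ReflTransGen (fun x y => E x y ∧ y ≠ d) a w ∨ ReachWithout E c a d := by
  induction h with
  | refl => exact .inl .refl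
  | @tail y w hay hyw ih =>
    refine ih.elim (fun had => ?_) .inr
    by_cases hw : w = d
    · exact .inr (.inr ⟨y, hay, hw ▸ hyw.1⟩)
    · exact .inl (had.tail ⟨hyw.1, hw⟩)

theorem ReachWithout.or_reachWithout {c a b : V} (h : ReachWithout E c a b) (d : V) :
    ReachWithout E d a b ∨ ReachWithout E c a d := by
  rcases h with rfl | ⟨w, haw, hwb⟩
  · exact .inl (.inl rfl)
  · exact (reflTransGen_ne_or_reachWithout haw d).imp (fun h => .inr ⟨w, h, hwb⟩) id

theorem reflTransGen_ne_of_not_between {c a w b : V} (haw : ReflTransGen E a w)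
    (hwb : TransGen E w b) (hc : ¬ (TransGen E a c ∧ TransGen E c b)) :
    ReflTransGen (fun x y => E x y ∧ y ≠ c) a w := by
  induction haw with
  | refl => exact .refl
  | tail hay hyw ih =>
    exact (ih (.head hyw hwb)).tail ⟨hyw, by rintro rfl; exact hc ⟨.tail' hay hyw, hwb⟩⟩

theorem reachWithout_of_not_between {c a b : V} (hab : ReflTransGen E a b)
    (hc : ¬ (TransGen E a c ∧ TransGen E c b)) : ReachWithout E c a b := by
  rcases hab.cases_tail with rfl | ⟨w, haw, hwb⟩
  · exact .inl rfl
  · exact .inr ⟨w, reflTransGen_ne_of_not_between haw (.single hwb) hc, hwb⟩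

end ReachWithout

theorem Acyclic.exists_source [Finite V] [Nonempty V] (hA : Acyclic E) : ∃ m, ∀ w, ¬ E w m := by
  have : IsTrans V (TransGen E) := ⟨fun _ _ _ => TransGen.trans⟩
  have : Std.Irrefl (TransGen E) := ⟨hA⟩
  obtain ⟨m, -, hm⟩ := (Finite.wellFounded_of_trans_of_irrefl (TransGen E)).has_min .univ
    Set.univ_nonempty
  exact ⟨m, fun w hw => hm w trivial (.single hw)⟩

namespace SBCore

variable {s t : V}

theorem reachWithout_iff (h : SBCore E s t) (v : V) :
    ReachWithout E t s v ↔ ReachWithout E s v t := by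
  rw [h.2.2.1 v, reachWithout_iff_coReachWithout]

theorem reachWithout_of_transGen (h : SBCore E s t) {u : V} (hut : TransGen E u t)
    (hus : ¬ TransGen E u s) : ReachWithout E t s u :=
  (h.reachWithout_iff u).2 (reachWithout_of_not_between hut.to_reflTransGen (hus ·.1))

theorem not_reachWithout_of_not_transGen (h : SBCore E s t) {u : V} (hus : u ≠ s) (hsu : ¬ TransGen E s u) :
    ¬ ReachWithout E s u t := fun hut => by
  rcases reflTransGen_iff_eq_or_transGen.1 ((h.reachWithout_iff u).2 hut).reflTransGen_s14 with
    h | h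
  exacts [hus h, hsu h]

end SBCore

section ExitUnique

variable {s₁ s₂ t : V}

theorem reachWithout_exit_of_reachWithout_entrance (h₁ : SBCore E s₁ t)
    (hkey : ¬ ReachWithout E s₂ s₁ t) {v : V} (hv : ReachWithout E s₂ s₁ v) (hvs₂ : v ≠ s₂) :
    ReachWithout E s₁ v s₂ := by
  have hv₁ : ReachWithout E t s₁ v := (hv.or_reachWithout t).resolve_right hkey
  exact (((h₁.reachWithout_iff v).1 hv₁).or_reachWithout s₂).resolve_left
    fun hvt => hkey (hv.trans hvt hvs₂)

theorem reachWithout_entrance_of_reachWithout_exit (hA : Acyclic E) (h₁ : SBCore E s₁ t)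
    (hs₂ : ReachWithout E t s₁ s₂) (hne : s₁ ≠ s₂) {v : V} (hv : ReachWithout E s₁ v s₂) :
    ReachWithout E s₂ s₁ v := by
  have hvt : ReachWithout E s₁ v t := hv.trans ((h₁.reachWithout_iff s₂).1 hs₂) hne.symm
  exact reachWithout_of_not_between ((h₁.reachWithout_iff v).2 hvt).reflTransGen_s14
    fun ⟨_, hs₂v⟩ => hA s₂ (hs₂v.trans_left hv.reflTransGen_s14)

theorem sbCore_of_sbCore_exit (hA : Acyclic E) (h₁ : SBCore E s₁ t) (h₂ : SBCore E s₂ t)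
    (hne : s₁ ≠ s₂) (hs₂s₁ : ¬ TransGen E s₂ s₁) : SBCore E s₁ s₂ := by
  have hs₂ : ReachWithout E t s₁ s₂ := h₁.reachWithout_of_transGen h₂.2.1 hs₂s₁
  have hkey : ¬ ReachWithout E s₂ s₁ t := h₂.not_reachWithout_of_not_transGen hne hs₂s₁
  refine ⟨hne, ?_, fun v => ?_, fun v hv => hA v (TransGen.mono (fun _ _ h => h.1) _ _ hv)⟩
  · exact (reflTransGen_iff_eq_or_transGen.1 hs₂.reflTransGen_s14).resolve_left hne.symm
  rw [← reachWithout_iff_coReachWithout]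
  refine ⟨fun hv => ?_, reachWithout_entrance_of_reachWithout_exit hA h₁ hs₂ hne⟩
  by_cases hvs₂ : v = s₂
  · exact .inl hvs₂
  · exact reachWithout_exit_of_reachWithout_entrance h₁ hkey hv hvs₂

theorem Superbubble.eq_of_exit_eq (hA : Acyclic E) (h₁ : Superbubble E s₁ t)
    (h₂ : Superbubble E s₂ t) : s₁ = s₂ := by
  by_contra hne
  wlog hs₂s₁ : ¬ TransGen E s₂ s₁ generalizing s₁ s₂
  · exact this h₂ h₁ (Ne.symm hne) fun hs₁s₂ => hA s₂ ((not_not.1 hs₂s₁).trans hs₁s₂)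
  have hs₂ : ReachWithout E t s₁ s₂ := h₁.1.reachWithout_of_transGen h₂.1.2.1 hs₂s₁
  exact h₁.2 s₂ hs₂ h₂.1.1 (sbCore_of_sbCore_exit hA h₁.1 h₂.1 hne hs₂s₁)

end ExitUnique

end

/-- In a DAG with n ≥ 1 vertices there are at most n - 1 distinct superbubbles. -/
theorem superbubble_count_le {V : Type*} [Fintype V] (E : V → V → Prop)
    (hA : Acyclic E) (hn : 1 ≤ Fintype.card V) :
    {p : V × V | Superbubble E p.1 p.2}.ncard ≤ Fintype.card V - 1 := by
  have : Nonempty V := Fintype.card_pos_iff.mp hn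
  obtain ⟨m, hm⟩ := hA.exists_source
  set S := {p : V × V | Superbubble E p.1 p.2}
  have hinj : Set.InjOn Prod.snd S := fun p hp q hq hpq =>
    Prod.ext (Superbubble.eq_of_exit_eq hA hp (hpq ▸ hq)) hpq
  have hm_exit : m ∉ Prod.snd '' S := by
    rintro ⟨p, hp, rfl⟩
    obtain ⟨w, -, hw⟩ := Relation.TransGen.tail'_iff.1 hp.1.2.1
    exact hm w hw
  have hlt : (Prod.snd '' S).ncard < Fintype.card V := by
    rw [← Nat.card_eq_fintype_card]
    exact Set.ncard_lt_card fun h => hm_exit (h ▸ Set.mem_univ m)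
  rw [← hinj.ncard_image]
  omega
end

section
/- Let ⟨s, t⟩ be a superbubble in a DAG G with vertex set U. Then the induced subgraph on U has s as its unique vertex with no in-neighbours inside U and t as its unique vertex with no out-neighbours inside U (i.e., it is single-source with source s and single-sink with sink t). -/
/-!
Every vertex of `U` other than `s` is entered by the last edge of a path from `s` inside `U`,
so it has an in-neighbour in `U`; an in-neighbour of `s` in `U` would close a cycle through `s`
inside `U`. Reversing all edges turns the matching condition into the same situation for `t`.
-/

open Relation

section

variable {V : Type*} {E : V → V → Prop} {a s t v : V}

theorem ReachWithout.of_reflTransGen (h : ReflTransGen (fun x y => E x y ∧ y ≠ a) s v) :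
    ReachWithout E a s v := by
  rcases h.cases_tail with rfl | ⟨w, hw, he⟩
  · exact Or.inl rfl
  · exact Or.inr ⟨w, hw, he.1⟩

theorem ReachWithout.reflTransGen_induced (h : ReachWithout E a s v) :
    ReflTransGen (fun x y => E x y ∧ x ∈ {w | ReachWithout E a s w} ∧
      y ∈ {w | ReachWithout E a s w}) s v := by
  have path : ∀ {w}, ReflTransGen (fun x y => E x y ∧ y ≠ a) s w →
      ReflTransGen (fun x y => E x y ∧ x ∈ {w | ReachWithout E a s w} ∧
        y ∈ {w | ReachWithout E a s w}) s w := by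
    intro w hw
    induction hw with
    | refl => exact .refl
    | tail hxy hyz ih => exact ih.tail ⟨hyz.1, .of_reflTransGen hxy, Or.inr ⟨_, hxy, hyz.1⟩⟩
  rcases h with rfl | ⟨w, hw, he⟩
  · exact .refl
  · exact (path hw).tail ⟨he, .of_reflTransGen hw, Or.inr ⟨w, hw, he⟩⟩

theorem ReachWithout.forall_not_edge_to_iff (hacyc : AcyclicOn E {w | ReachWithout E a s w})
    (hv : ReachWithout E a s v) : (∀ u, ReachWithout E a s u → ¬ E u v) ↔ v = s := by
  constructor
  · intro hno
    rcases hv with rfl | ⟨w, hw, he⟩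
    · rfl
    · exact absurd he (hno w (.of_reflTransGen hw))
  · rintro rfl u hu he
    exact hacyc v (TransGen.tail' hu.reflTransGen_induced ⟨he, hu, hv⟩)

theorem coReachWithout_iff_reachWithout_flip :
    CoReachWithout E a v t ↔ ReachWithout (flip E) a t v := by
  unfold CoReachWithout ReachWithout
  rw [eq_comm]
  refine or_congr Iff.rfl (exists_congr fun w => ?_)
  rw [and_comm, ← reflTransGen_swap]
  rfl

theorem AcyclicOn.flip {U : Set V} (h : AcyclicOn E U) : AcyclicOn (flip E) U := by
  intro v hv
  exact h v (transGen_swap.mp (TransGen.mono (fun x y hxy => ⟨hxy.1, hxy.2.2, hxy.2.1⟩) _ _ hv))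

theorem SBCore.forall_not_edge_from_iff (h : SBCore E s t) (hv : ReachWithout E t s v) :
    (∀ u, ReachWithout E t s u → ¬ E v u) ↔ v = t := by
  obtain ⟨-, -, hmatch, hacyc⟩ := h
  have hU : ∀ w, ReachWithout E t s w ↔ ReachWithout (flip E) s t w :=
    fun w => (hmatch w).trans coReachWithout_iff_reachWithout_flip
  simp only [hU] at hv hacyc ⊢
  exact hv.forall_not_edge_to_iff hacyc.flip

end

theorem superbubble_single_source_sink_general {V : Type*} (E : V → V → Prop)
    (s t : V) (hSB : Superbubble E s t) :
    (∀ v, ReachWithout E t s v →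
      ((∀ u, ReachWithout E t s u → ¬ E u v) ↔ v = s)) ∧
    (∀ v, ReachWithout E t s v →
      ((∀ u, ReachWithout E t s u → ¬ E v u) ↔ v = t)) := by
  obtain ⟨hcore, -⟩ := hSB
  exact ⟨fun _ hv => hv.forall_not_edge_to_iff hcore.2.2.2,
    fun _ hv => hcore.forall_not_edge_from_iff hv⟩

/-- For a superbubble ⟨s, t⟩ with vertex set U in a DAG, the induced subgraph on U has
s as its unique vertex without in-neighbours inside U, and t as its unique vertex
without out-neighbours inside U. -/
theorem superbubble_single_source_sink {V : Type*} (E : V → V → Prop)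
    (hA : Acyclic E)
    (s t : V) (hSB : Superbubble E s t) :
    (∀ v, ReachWithout E t s v →
      ((∀ u, ReachWithout E t s u → ¬ E u v) ↔ v = s)) ∧
    (∀ v, ReachWithout E t s v →
      ((∀ u, ReachWithout E t s u → ¬ E v u) ↔ v = t)) :=
  superbubble_single_source_sink_general E s t hSB
end
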